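/- Let m ≥ 3 and let v₁,…,v_{m+3} be pairwise orthogonal roots of the lattice D_{2m}. Let M be the ℤ-span of v₁,…,v_{m+3} and let M' be the primitive closure of M in D_{2m}. Then the index [M' : M] is at least 4. -/

import Mathlib

/-!
A root of `ℤⁿ` is `±eᵢ ± eⱼ`. Orthogonal roots have equal or disjoint supports, and at most two
of them share a support, since three vectors `(±1, ±1)` are never pairwise orthogonal. So `m + 3`
orthogonal roots in `ℤ^{2m}`, which occupy at most `m` disjoint supports, fill at least three
supports with two roots `u, u'`; for each such pair `(u + u') / 2 = ±eₖ` has odd coordinate sum,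
pairs to `1` with `u` and `u'` and to `0` with every other root. Sums of two of these half-sums
lie in `M'`.

On the other hand `z ↦ (⟨z, vₖ⟩ mod 2)ₖ` has kernel exactly `M` on `M'`: if `n • z = ∑ cₖ vₖ` then
`n ⟨z, vₖ⟩ = 2 cₖ`, so even pairings make every `cₖ` divisible by `n`. The half-sums of three
distinct supports give four different images, hence `[M' : M] ≥ 4`.
-/

/-- The lattice `Dₙ`: the subgroup `{x ∈ ℤⁿ : x₁ + ⋯ + xₙ is even}` of `ℤⁿ`,
equipped (implicitly) with the standard Euclidean bilinear form `⟨x,y⟩ = ∑ xᵢyᵢ`. -/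
def DLat (n : ℕ) : AddSubgroup (Fin n → ℤ) where
  carrier := {x | Even (∑ i, x i)}
  zero_mem' := by simp
  add_mem' := by
    intro a b ha hb
    simpa [Finset.sum_add_distrib] using ha.add hb
  neg_mem' := by
    intro a ha
    simpa using ha.neg

/-- The primitive closure of a subgroup `M` inside the lattice `Dₙ`:
`M' = {x ∈ Dₙ : kx ∈ M for some nonzero integer k}`. -/
def primClosure (n : ℕ) (M : AddSubgroup (Fin n → ℤ)) : AddSubgroup (Fin n → ℤ) where
  carrier := {x | x ∈ DLat n ∧ ∃ k : ℤ, k ≠ 0 ∧ k • x ∈ M}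
  zero_mem' := ⟨(DLat n).zero_mem, 1, one_ne_zero, by simpa using M.zero_mem⟩
  add_mem' := by
    rintro a b ⟨haD, k, hk, hka⟩ ⟨hbD, l, hl, hlb⟩
    refine ⟨(DLat n).add_mem haD hbD, k * l, mul_ne_zero hk hl, ?_⟩
    have h1 : (k * l) • (a + b) = l • (k • a) + k • (l • b) := by
      rw [smul_add, smul_smul, smul_smul, mul_comm l k]
    rw [h1]
    exact M.add_mem (M.zsmul_mem hka l) (M.zsmul_mem hlb k)
  neg_mem' := by
    rintro a ⟨haD, k, hk, hka⟩
    exact ⟨(DLat n).neg_mem haD, k, hk, by simpa [smul_neg] using M.neg_mem hka⟩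

open scoped Finset

def coordSupport {ι : Type*} [Fintype ι] (u : ι → ℤ) : Finset ι := {i | u i ≠ 0}

section Roots

variable {ι : Type*} [Fintype ι] {u u' u'' : ι → ℤ}

@[simp]
theorem mem_coordSupport {i : ι} : i ∈ coordSupport u ↔ u i ≠ 0 := by
  simp [coordSupport]

theorem mul_self_eq_one_of_root (hu : u ⬝ᵥ u = 2) {i : ι} (hi : u i ≠ 0) : u i * u i = 1 := by
  have hle : u i * u i ≤ 2 :=
    hu ▸ Finset.single_le_sum (fun j _ => mul_self_nonneg (u j)) (Finset.mem_univ i)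
  have : -1 ≤ u i := by nlinarith
  have : u i ≤ 1 := by nlinarith
  obtain h | h : u i = 1 ∨ u i = -1 := by omega
  all_goals simp [h]

theorem card_coordSupport_of_root (hu : u ⬝ᵥ u = 2) : #(coordSupport u) = 2 := by
  have hsum : ∑ i ∈ coordSupport u, u i * u i = u ⬝ᵥ u :=
    Finset.sum_filter_of_ne fun i _ h => left_ne_zero_of_mul h
  rw [hu, Finset.sum_congr rfl fun i hi => mul_self_eq_one_of_root hu (mem_coordSupport.mp hi),
    Finset.sum_const, nsmul_eq_mul, mul_one] at hsum
  exact_mod_cast hsum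

theorem even_add_of_coordSupport_eq (hu : u ⬝ᵥ u = 2) (hu' : u' ⬝ᵥ u' = 2)
    (hS : coordSupport u = coordSupport u') (i : ι) : Even (u i + u' i) := by
  have hiff : u i ≠ 0 ↔ u' i ≠ 0 := by rw [← mem_coordSupport, hS, mem_coordSupport]
  by_cases hi : u i = 0
  · have hi' : u' i = 0 := by simpa [hi] using hiff
    simp [hi, hi']
  · have hodd : ∀ {w : ι → ℤ}, w ⬝ᵥ w = 2 → w i ≠ 0 → Odd (w i) := fun hw hwi =>
      (Int.odd_mul.mp ((mul_self_eq_one_of_root hw hwi).symm ▸ odd_one)).1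
    exact (hodd hu hi).add_odd (hodd hu' (hiff.mp hi))

theorem odd_sum_of_dotProduct_self_eq_one (hu : u ⬝ᵥ u = 1) : Odd (∑ i, u i) := by
  have heven : Even (∑ i, u i * (u i + 1)) :=
    Finset.even_sum _ fun i _ => Int.even_mul_succ_self (u i)
  have hsplit : ∑ i, u i * (u i + 1) = u ⬝ᵥ u + ∑ i, u i := by
    simp only [mul_add, mul_one, Finset.sum_add_distrib, dotProduct]
  rw [hsplit, hu] at heven
  obtain ⟨r, hr⟩ := heven
  exact ⟨r - 1, by omega⟩

variable [DecidableEq ι]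

theorem dotProduct_eq_sum_inter_coordSupport :
    u ⬝ᵥ u' = ∑ i ∈ coordSupport u ∩ coordSupport u', u i * u' i := by
  refine (Finset.sum_subset (Finset.subset_univ _) fun i _ hi => ?_).symm
  rw [Finset.mem_inter, mem_coordSupport, mem_coordSupport, not_and_or, not_not, not_not] at hi
  rcases hi with hi | hi <;> simp [hi]

theorem coordSupport_eq_or_disjoint_of_orthogonal (hu : u ⬝ᵥ u = 2) (hu' : u' ⬝ᵥ u' = 2)
    (huu' : u ⬝ᵥ u' = 0) :
    coordSupport u = coordSupport u' ∨ Disjoint (coordSupport u) (coordSupport u') := by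
  rw [dotProduct_eq_sum_inter_coordSupport] at huu'
  set I := coordSupport u ∩ coordSupport u'
  have hI : #I ≤ 2 :=
    card_coordSupport_of_root hu ▸ Finset.card_le_card Finset.inter_subset_left
  interval_cases h : #I
  · exact .inr (Finset.disjoint_iff_inter_eq_empty.mpr (Finset.card_eq_zero.mp h))
  · obtain ⟨i, hi⟩ := Finset.card_eq_one.mp h
    have hiI : i ∈ I := hi ▸ Finset.mem_singleton_self i
    rw [Finset.mem_inter, mem_coordSupport, mem_coordSupport] at hiI
    rw [hi, Finset.sum_singleton] at huu'
    exact absurd huu' (mul_ne_zero hiI.1 hiI.2)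
  · have hIu := Finset.eq_of_subset_of_card_le Finset.inter_subset_left
      (by rw [card_coordSupport_of_root hu, h])
    have hIu' := Finset.eq_of_subset_of_card_le Finset.inter_subset_right
      (by rw [card_coordSupport_of_root hu', h])
    exact .inl (hIu.symm.trans hIu')

/-- On a common support `{i, j}` the roots are `(±1, ±1)`; orthogonality of `u` to `u'` and `u''`
forces `u' i u'' i = u' j u'' j`, which contradicts `u' ⬝ᵥ u'' = 0`. -/
theorem not_pairwise_orthogonal_of_coordSupport_eq (hu : u ⬝ᵥ u = 2) (hu' : u' ⬝ᵥ u' = 2)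
    (hu'' : u'' ⬝ᵥ u'' = 2) (hS' : coordSupport u' = coordSupport u)
    (hS'' : coordSupport u'' = coordSupport u) (h₁ : u ⬝ᵥ u' = 0) (h₂ : u ⬝ᵥ u'' = 0)
    (h₃ : u' ⬝ᵥ u'' = 0) : False := by
  obtain ⟨i, j, hij, hS⟩ := Finset.card_eq_two.mp (card_coordSupport_of_root hu)
  have hdot : ∀ {w w' : ι → ℤ}, coordSupport w = coordSupport u →
      coordSupport w' = coordSupport u → w ⬝ᵥ w' = w i * w' i + w j * w' j := fun hw hw' => by
    rw [dotProduct_eq_sum_inter_coordSupport, hw, hw', Finset.inter_self, hS, Finset.sum_pair hij]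
  have hsq : ∀ {w : ι → ℤ}, w ⬝ᵥ w = 2 → coordSupport w = coordSupport u →
      w i * w i = 1 ∧ w j * w j = 1 := fun hw hwS =>
    ⟨mul_self_eq_one_of_root hw (mem_coordSupport.mp (by simp [hwS, hS])),
      mul_self_eq_one_of_root hw (mem_coordSupport.mp (by simp [hwS, hS]))⟩
  rw [hdot rfl hS'] at h₁
  rw [hdot rfl hS''] at h₂
  rw [hdot hS' hS''] at h₃
  obtain ⟨hui, huj⟩ := hsq hu rfl
  obtain ⟨hu'i, -⟩ := hsq hu' hS'
  obtain ⟨hu''i, -⟩ := hsq hu'' hS''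
  have h0 : u' i * u'' i = 0 := by
    suffices 2 * (u' i * u'' i) = 0 by linarith
    linear_combination u i * u'' i * h₁ - u j * u' j * h₂ - u' i * u'' i * hui +
      u' j * u'' j * huj + h₃
  have h1 : (u' i * u'' i) * (u' i * u'' i) = 1 := by
    linear_combination u'' i * u'' i * hu'i + hu''i
  simp [h0] at h1

end Roots

def dotProductParity {ι κ : Type*} [Fintype ι] (v : κ → ι → ℤ) : (ι → ℤ) →+ (κ → ZMod 2) where
  toFun z k := ((z ⬝ᵥ v k : ℤ) : ZMod 2)
  map_zero' := by ext; simp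
  map_add' x y := by ext; simp [add_dotProduct]

@[simp]
theorem dotProductParity_apply {ι κ : Type*} [Fintype ι] (v : κ → ι → ℤ) (z : ι → ℤ) (k : κ) :
    dotProductParity v z k = ((z ⬝ᵥ v k : ℤ) : ZMod 2) := rfl

section OrthogonalRoots

variable {ι κ : Type*} [Fintype ι] [Fintype κ] {v : κ → ι → ℤ}

theorem sum_smul_dotProduct_of_orthogonal (hroot : ∀ k, v k ⬝ᵥ v k = 2)
    (horth : Pairwise fun k l => v k ⬝ᵥ v l = 0) (c : κ → ℤ) (l : κ) :
    (∑ k, c k • v k) ⬝ᵥ v l = 2 * c l := by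
  rw [sum_dotProduct, Finset.sum_eq_single l (fun k _ hkl => by rw [smul_dotProduct, horth hkl,
    smul_zero]) (by simp), smul_dotProduct, hroot, smul_eq_mul, mul_comm]

theorem even_dotProduct_of_mem_closure (hroot : ∀ k, v k ⬝ᵥ v k = 2)
    (horth : Pairwise fun k l => v k ⬝ᵥ v l = 0) {z : ι → ℤ}
    (hz : z ∈ AddSubgroup.closure (Set.range v)) (l : κ) : Even (z ⬝ᵥ v l) := by
  obtain ⟨c, rfl⟩ := AddSubgroup.mem_closure_range_iff_of_fintype.mp hz
  rw [sum_smul_dotProduct_of_orthogonal hroot horth]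
  exact even_two_mul _

theorem mem_closure_of_smul_mem_of_even_dotProduct (hroot : ∀ k, v k ⬝ᵥ v k = 2)
    (horth : Pairwise fun k l => v k ⬝ᵥ v l = 0) {z : ι → ℤ} {n : ℤ} (hn : n ≠ 0)
    (hnz : n • z ∈ AddSubgroup.closure (Set.range v)) (heven : ∀ l, Even (z ⬝ᵥ v l)) :
    z ∈ AddSubgroup.closure (Set.range v) := by
  obtain ⟨c, hc⟩ := AddSubgroup.mem_closure_range_iff_of_fintype.mp hnz
  choose d hd using fun l => (heven l).two_dvd
  have hcd : ∀ l, c l = n * d l := fun l => by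
    have := sum_smul_dotProduct_of_orthogonal hroot horth c l
    rw [← hc, smul_dotProduct, hd l, smul_eq_mul] at this
    linarith
  have : n • z = n • ∑ l, d l • v l := by
    simp only [hc, hcd, Finset.smul_sum, mul_smul]
  rw [smul_right_injective _ hn this]
  exact AddSubgroup.mem_closure_range_iff_of_fintype.mpr ⟨d, rfl⟩

theorem addSubgroupOf_closure_eq_ker (hroot : ∀ k, v k ⬝ᵥ v k = 2)
    (horth : Pairwise fun k l => v k ⬝ᵥ v l = 0) {M' : AddSubgroup (ι → ℤ)}
    (hM' : ∀ z ∈ M', ∃ n : ℤ, n ≠ 0 ∧ n • z ∈ AddSubgroup.closure (Set.range v)) :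
    (AddSubgroup.closure (Set.range v)).addSubgroupOf M' =
      ((dotProductParity v).comp M'.subtype).ker := by
  ext z
  simp only [AddSubgroup.mem_addSubgroupOf, AddMonoidHom.mem_ker, AddMonoidHom.comp_apply,
    AddSubgroup.coe_subtype, funext_iff, dotProductParity_apply, Pi.zero_apply,
    ZMod.intCast_eq_zero_iff_even]
  refine ⟨even_dotProduct_of_mem_closure hroot horth, fun heven => ?_⟩
  obtain ⟨n, hn, hnz⟩ := hM' z z.2
  exact mem_closure_of_smul_mem_of_even_dotProduct hroot horth hn hnz heven

variable [DecidableEq ι]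

theorem three_le_card_supports_with_two_roots (hroot : ∀ k, v k ⬝ᵥ v k = 2)
    (horth : Pairwise fun k l => v k ⬝ᵥ v l = 0)
    (hcard : Fintype.card ι + 6 ≤ 2 * Fintype.card κ) :
    3 ≤ #{t ∈ Finset.univ.image (fun k => coordSupport (v k)) |
      1 < #{k | coordSupport (v k) = t}} := by
  set T := Finset.univ.image fun k => coordSupport (v k)
  set fiber : Finset ι → Finset κ := fun t => {k | coordSupport (v k) = t}
  have hT : 2 * #T ≤ Fintype.card ι := by
    have hdisj : (T : Set (Finset ι)).PairwiseDisjoint id := by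
      rintro _ hk _ hl hkl
      obtain ⟨k, -, rfl⟩ := Finset.mem_image.mp hk
      obtain ⟨l, -, rfl⟩ := Finset.mem_image.mp hl
      have hkl' : k ≠ l := by rintro rfl; exact hkl rfl
      exact (coordSupport_eq_or_disjoint_of_orthogonal (hroot k) (hroot l)
        (horth hkl')).resolve_left hkl
    calc 2 * #T = ∑ t ∈ T, #t := by
          rw [Finset.sum_congr rfl fun t ht => ?_, Finset.sum_const, smul_eq_mul, mul_comm]
          obtain ⟨k, -, rfl⟩ := Finset.mem_image.mp ht
          exact card_coordSupport_of_root (hroot k)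
      _ = #(T.biUnion id) := (Finset.card_biUnion hdisj).symm
      _ ≤ Fintype.card ι := Finset.card_le_univ _
  have hfiber : ∀ t, #(fiber t) ≤ 2 := fun t => by
    by_contra! h
    obtain ⟨a, b, c, ha, hb, hc, hab, hac, hbc⟩ := Finset.two_lt_card_iff.mp h
    simp only [fiber, Finset.mem_filter, Finset.mem_univ, true_and] at ha hb hc
    exact not_pairwise_orthogonal_of_coordSupport_eq (hroot a) (hroot b) (hroot c)
      (hb.trans ha.symm) (hc.trans ha.symm) (horth hab) (horth hac) (horth hbc)
  have hκ : Fintype.card κ = ∑ t ∈ T, #(fiber t) :=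
    Finset.card_eq_sum_card_fiberwise fun k _ => Finset.mem_image_of_mem _ (Finset.mem_univ k)
  have hle : ∑ t ∈ T, #(fiber t) ≤ ∑ t ∈ T, (1 + if 1 < #(fiber t) then 1 else 0) :=
    Finset.sum_le_sum fun t _ => by have := hfiber t; split_ifs <;> omega
  rw [Finset.sum_add_distrib, Finset.sum_const, smul_eq_mul, mul_one,
    ← Finset.card_filter] at hle
  change 3 ≤ #{t ∈ T | 1 < #(fiber t)}
  omega

theorem exists_half_sum_of_two_roots (hroot : ∀ k, v k ⬝ᵥ v k = 2)
    (horth : Pairwise fun k l => v k ⬝ᵥ v l = 0) {t : Finset ι}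
    (ht : 1 < #{k | coordSupport (v k) = t}) :
    ∃ a, coordSupport (v a) = t ∧ ∃ h : ι → ℤ,
      (2 : ℤ) • h ∈ AddSubgroup.closure (Set.range v) ∧ Odd (∑ i, h i) ∧ h ⬝ᵥ v a = 1 ∧
      ∀ k, coordSupport (v k) ≠ t → h ⬝ᵥ v k = 0 := by
  obtain ⟨a, ha, a', ha', haa'⟩ := Finset.one_lt_card.mp ht
  simp only [Finset.mem_filter, Finset.mem_univ, true_and] at ha ha'
  choose h hh using even_add_of_coordSupport_eq (hroot a) (hroot a') (ha.trans ha'.symm)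
  have h2 : (2 : ℤ) • h = v a + v a' := funext fun i => by simp [hh i, two_mul]
  have hdot : ∀ w, 2 * (h ⬝ᵥ w) = v a ⬝ᵥ w + v a' ⬝ᵥ w := fun w => by
    rw [← add_dotProduct, ← h2, smul_dotProduct, smul_eq_mul]
  refine ⟨a, ha, h, h2 ▸ add_mem (AddSubgroup.subset_closure ⟨a, rfl⟩)
    (AddSubgroup.subset_closure ⟨a', rfl⟩), odd_sum_of_dotProduct_self_eq_one ?_, ?_, ?_⟩
  · have h4 : 4 * (h ⬝ᵥ h) = (v a + v a') ⬝ᵥ (v a + v a') := by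
      rw [← h2, smul_dotProduct, dotProduct_smul, smul_eq_mul, smul_eq_mul]; ring
    rw [add_dotProduct, dotProduct_add, dotProduct_add, hroot, hroot, horth haa',
      horth haa'.symm] at h4
    omega
  · have := hdot (v a)
    rw [hroot, horth haa'.symm] at this
    omega
  · intro k hk
    have hak : a ≠ k := by rintro rfl; exact hk ha
    have ha'k : a' ≠ k := by rintro rfl; exact hk ha'
    have := hdot (v k)
    rw [horth hak, horth ha'k] at this
    omega

end OrthogonalRoots

theorem four_le_card_range {G κ : Type*} [AddGroup G] [Finite κ] (f : G →+ (κ → ZMod 2))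
    (a b : κ) {x y : G} (hxa : f x a = 1) (hxb : f x b = 1) (hya : f y a = 0) (hyb : f y b = 1) :
    4 ≤ Nat.card f.range := by
  have hsurj : Function.Surjective fun p : f.range => ((p : κ → ZMod 2) a, (p : κ → ZMod 2) b) := by
    rintro ⟨p, q⟩
    fin_cases p <;> fin_cases q
    · exact ⟨0, by simp; rfl⟩
    · exact ⟨⟨f y, y, rfl⟩, by simp [hya, hyb]; rfl⟩
    · exact ⟨⟨f (x + y), x + y, rfl⟩, by simp [hxa, hxb, hya, hyb]; decide⟩
    · exact ⟨⟨f x, x, rfl⟩, by simp [hxa, hxb]; rfl⟩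
  simpa using Nat.card_le_card_of_surjective _ hsurj

theorem add_mem_primClosure {n : ℕ} {M : AddSubgroup (Fin n → ℤ)} {x y : Fin n → ℤ}
    (hx : Odd (∑ i, x i)) (hy : Odd (∑ i, y i)) (h2x : (2 : ℤ) • x ∈ M)
    (h2y : (2 : ℤ) • y ∈ M) : x + y ∈ primClosure n M :=
  ⟨by simpa [DLat, Finset.sum_add_distrib] using hx.add_odd hy, 2, two_ne_zero,
    smul_add (2 : ℤ) x y ▸ add_mem h2x h2y⟩

theorem index_primitive_closure_D_even_general (m : ℕ)
    (v : Fin (m + 3) → (Fin (2 * m) → ℤ))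
    (hroot : ∀ k, ∑ i, v k i * v k i = 2)
    (horth : ∀ k l, k ≠ l → ∑ i, v k i * v l i = 0) :
    4 ≤ ((AddSubgroup.closure (Set.range v)).addSubgroupOf
        (primClosure (2 * m) (AddSubgroup.closure (Set.range v)))).index := by
  obtain ⟨t₁, t₂, t₃, ht₁, ht₂, ht₃, h₁₂, h₁₃, h₂₃⟩ := Finset.two_lt_card_iff.mp
    (three_le_card_supports_with_two_roots hroot horth (by simp only [Fintype.card_fin]; omega))
  obtain ⟨a, ha, x₁, h2x₁, hx₁, hx₁a, hx₁k⟩ :=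
    exists_half_sum_of_two_roots hroot horth (Finset.mem_filter.mp ht₁).2
  obtain ⟨b, hb, x₂, h2x₂, hx₂, hx₂b, hx₂k⟩ :=
    exists_half_sum_of_two_roots hroot horth (Finset.mem_filter.mp ht₂).2
  obtain ⟨-, -, x₃, h2x₃, hx₃, -, hx₃k⟩ :=
    exists_half_sum_of_two_roots hroot horth (Finset.mem_filter.mp ht₃).2
  rw [addSubgroupOf_closure_eq_ker hroot horth (M' := primClosure _ _) fun _ hz => hz.2,
    AddSubgroup.index_ker]
  refine four_le_card_range _ a b (x := ⟨x₁ + x₂, add_mem_primClosure hx₁ hx₂ h2x₁ h2x₂⟩)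
    (y := ⟨x₂ + x₃, add_mem_primClosure hx₂ hx₃ h2x₂ h2x₃⟩) ?_ ?_ ?_ ?_ <;>
  simp [add_dotProduct, hx₁a, hx₂b, hx₁k b (hb.trans_ne h₁₂.symm), hx₂k a (ha.trans_ne h₁₂),
    hx₃k a (ha.trans_ne h₁₃), hx₃k b (hb.trans_ne h₂₃)]

/-- Let `m ≥ 3` and let `v₁,…,v_{m+3}` be pairwise orthogonal roots of the lattice `D_{2m}`.
Let `M` be the `ℤ`-span of `v₁,…,v_{m+3}` and let `M'` be the primitive closure of `M` in
`D_{2m}`.  Then the index `[M' : M]` is at least 4. -/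
theorem index_primitive_closure_D_even (m : ℕ) (hm : 3 ≤ m)
    (v : Fin (m + 3) → (Fin (2 * m) → ℤ))
    (hmem : ∀ k, v k ∈ DLat (2 * m))
    (hroot : ∀ k, ∑ i, v k i * v k i = 2)
    (horth : ∀ k l, k ≠ l → ∑ i, v k i * v l i = 0) :
    4 ≤ ((AddSubgroup.closure (Set.range v)).addSubgroupOf
        (primClosure (2 * m) (AddSubgroup.closure (Set.range v)))).index :=
  index_primitive_closure_D_even_general m v hroot horth
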